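/- For the eventual consensus problem with voting threshold h, the conditions d + t < h (safety) and q + t < n − h (liveness) are simultaneously satisfiable for some h ∈ (n/2, n] if and only if n > 2t + d + q (assuming the natural constraint that safety safety threshold exceeds n/2). -/

import Mathlib

theorem stmt_8_general (n t d q : ℝ) (ht : 0 ≤ t) (hq : 0 ≤ q) :
    (∃ h : ℝ, n / 2 < h ∧ h ≤ n ∧ d + t < h ∧ q + t < n - h) ↔
      (n > 2 * t + d + q ∧ n > 2 * (q + t)) := by
  constructor
  · rintro ⟨h, hmajority, -, hsafe, hlive⟩
    constructor <;> linarith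
  · rintro ⟨hsum, hquorum⟩
    have hwindow : max (n / 2) (d + t) < n - q - t := max_lt (by linarith) (by linarith)
    obtain ⟨h, hlower, hupper⟩ := exists_between hwindow
    obtain ⟨hmajority, hsafe⟩ := max_lt_iff.mp hlower
    exact ⟨h, hmajority, by linarith, hsafe, by linarith⟩

/-- Eventual consensus threshold characterization: the safety condition `d + t < h` and
the liveness condition `q + t < n - h` are simultaneously satisfiable for some threshold
`h ∈ (n/2, n]` if and only if `n > 2t + d + q` and `n > 2(q + t)`. -/
theorem stmt_8 (n t d q : ℝ) (ht : 0 ≤ t) (hd : 0 ≤ d) (hq : 0 ≤ q) (hn : 0 < n) :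
    (∃ h : ℝ, n / 2 < h ∧ h ≤ n ∧ d + t < h ∧ q + t < n - h) ↔
      (n > 2 * t + d + q ∧ n > 2 * (q + t)) :=
  stmt_8_general n t d q ht hq
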